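/- Let Y_1,…,Y_n be pairwise commuting linear vector fields on ℝⁿ, n ≥ 1, with D = det ℓ ≠ 0 (not identically zero). Then the divergences div Y_i, i = 1,…,n, are not all zero; equivalently, if div Y_i = 0 for all i, then D vanishes identically. -/

import Mathlib

open MvPolynomial
open Matrix

/-- The action of the linear vector field `Y = Σ_{r,s} A r s • x_s ∂_r` on polynomials. -/
noncomputable def linVF {n : ℕ} (A : Matrix (Fin n) (Fin n) ℝ)
    (P : MvPolynomial (Fin n) ℝ) : MvPolynomial (Fin n) ℝ :=
  ∑ r, (∑ s, C (A r s) * X s) * pderiv r P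

/-- The matrix `ℓ` of coefficient linear forms of the vector fields `Y_i`. -/
noncomputable def coeffMat {n : ℕ} (a : Fin n → Matrix (Fin n) (Fin n) ℝ) :
    Matrix (Fin n) (Fin n) (MvPolynomial (Fin n) ℝ) :=
  fun i r => ∑ s, C (a i r s) * X s

/-- `linVF A` as a derivation. -/
noncomputable def linD {n : ℕ} (A : Matrix (Fin n) (Fin n) ℝ) :
    Derivation ℝ (MvPolynomial (Fin n) ℝ) (MvPolynomial (Fin n) ℝ) where
  toLinearMap :=
    { toFun := linVF A
      map_add' := fun P Q => by simp [linVF, mul_add, Finset.sum_add_distrib]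
      map_smul' := fun c P => by
        simp [linVF, Finset.smul_sum, smul_eq_C_mul, pderiv_C_mul, mul_left_comm] }
  map_one_eq_zero' := by show linVF A 1 = 0; simp [linVF]
  leibniz' P Q := by
    change linVF A (P * Q) = P • linVF A Q + Q • linVF A P
    simp only [LinearMap.coe_mk, AddHom.coe_mk, linVF, pderiv_mul, smul_eq_mul, mul_add,
      Finset.sum_add_distrib, Finset.mul_sum]
    rw [add_comm]
    congr 1 <;> exact Finset.sum_congr rfl fun r _ => by ring

@[simp] lemma linD_apply {n : ℕ} (A : Matrix (Fin n) (Fin n) ℝ)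
    (P : MvPolynomial (Fin n) ℝ) : linD A P = linVF A P := rfl

lemma linVF_X {n : ℕ} (A : Matrix (Fin n) (Fin n) ℝ) (r : Fin n) :
    linVF A (X r) = ∑ s, C (A r s) * X s := by
  simp [linVF, pderiv_X, Pi.single_apply]

lemma derivation_prod {S : Type*} [CommRing S] [Algebra ℝ S]
    (d : Derivation ℝ S S) {ι : Type*} [DecidableEq ι] (s : Finset ι) (f : ι → S) :
    d (∏ i ∈ s, f i) = ∑ i ∈ s, (∏ j ∈ s.erase i, f j) * d (f i) := by
  induction s using Finset.induction_on with
  | empty => simp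
  | @insert k s hk ih =>
      rw [Finset.prod_insert hk, d.leibniz, ih, Finset.sum_insert hk,
        Finset.erase_insert hk, smul_eq_mul, smul_eq_mul, Finset.mul_sum, add_comm]
      congr 1
      exact Finset.sum_congr rfl fun i hi => by
        rw [Finset.erase_insert_of_ne (fun h => hk (by rw [h]; exact hi)),
          Finset.prod_insert (fun h => hk (Finset.erase_subset _ _ h))]
        ring

lemma derivation_det {S : Type*} [CommRing S] [Algebra ℝ S] {n : ℕ}
    (d : Derivation ℝ S S) (M : Matrix (Fin n) (Fin n) S) :
    d M.det = ∑ r, (M.updateCol r fun j => d (M j r)).det := by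
  simp only [Matrix.det_apply, map_sum]
  rw [Finset.sum_comm]
  refine Finset.sum_congr rfl fun σ _ => ?_
  rw [Units.smul_def, d.map_smul_of_tower, derivation_prod, Finset.smul_sum]
  refine Finset.sum_congr rfl fun r _ => ?_
  rw [Units.smul_def]
  congr 1
  rw [← Finset.mul_prod_erase _ _ (Finset.mem_univ r), Matrix.updateCol_apply,
    if_pos rfl, mul_comm]
  congr 1
  exact Finset.prod_congr rfl fun i hi => by
    rw [Matrix.updateCol_apply, if_neg (Finset.ne_of_mem_erase hi)]

lemma coeff_pderiv {n : ℕ} (f : MvPolynomial (Fin n) ℝ) (i : Fin n) (m : Fin n →₀ ℕ) :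
    coeff m (pderiv i f) = ((m i : ℝ) + 1) * coeff (m + Finsupp.single i 1) f := by
  induction f using MvPolynomial.induction_on' with
  | monomial s c =>
      rw [pderiv_monomial, coeff_monomial, coeff_monomial]
      by_cases h : s = m + Finsupp.single i 1
      · subst h
        rw [if_pos, if_pos rfl]
        · simp only [Finsupp.add_apply, Finsupp.single_apply, if_pos rfl]
          push_cast
          ring
        · ext j
          by_cases hj : j = i <;>
            simp [Finsupp.single_apply, hj, Finsupp.add_apply, Finsupp.tsub_apply]
      · rw [if_neg h, mul_zero]
        by_cases hs : s i = 0
        · simp [hs]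
        · have hne : ¬(s - Finsupp.single i 1 = m) := by
            intro hEq
            apply h
            ext j
            have hj := DFunLike.congr_fun hEq j
            by_cases hji : j = i
            · subst hji
              simp [Finsupp.tsub_apply, Finsupp.single_apply, Finsupp.add_apply] at hj ⊢
              omega
            · simp [Finsupp.tsub_apply, Finsupp.single_apply, Finsupp.add_apply,
                Ne.symm hji] at hj ⊢
              omega
          rw [if_neg hne]
  | add p q hp hq => simp [hp, hq, mul_add]

lemma eq_C_of_pderiv_eq_zero {n : ℕ} (f : MvPolynomial (Fin n) ℝ)
    (h : ∀ i, pderiv i f = 0) : f = C (coeff 0 f) := by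
  ext m
  rw [coeff_C]
  by_cases hm : 0 = m
  · subst hm; simp
  · rw [if_neg hm]
    obtain ⟨i, hi⟩ : ∃ i, m i ≠ 0 := by
      by_contra hc
      push_neg at hc
      exact hm (by ext j; simp [hc j])
    have hle : Finsupp.single i 1 ≤ m := by
      rw [Finsupp.single_le_iff]; omega
    have hkey := coeff_pderiv f i (m - Finsupp.single i 1)
    rw [h i, tsub_add_cancel_of_le hle, coeff_zero] at hkey
    exact (mul_eq_zero.mp hkey.symm).resolve_left (Nat.cast_add_one_ne_zero _)

lemma linVF_coeffMat {n : ℕ} (a : Fin n → Matrix (Fin n) (Fin n) ℝ)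
    (hcomm : ∀ i j P, linVF (a i) (linVF (a j) P) = linVF (a j) (linVF (a i) P))
    (i j r : Fin n) :
    linVF (a i) (coeffMat a j r) = ∑ t, C (a i r t) * coeffMat a j t := by
  have h1 : coeffMat a j r = linVF (a j) (X r) := (linVF_X _ _).symm
  rw [h1, hcomm, linVF_X]
  rw [show linVF (a j) = ⇑(linD (a j)) from rfl, map_sum]
  refine Finset.sum_congr rfl fun t _ => ?_
  rw [C_mul', Derivation.map_smul, smul_eq_C_mul]
  congr 1
  rw [linD_apply, linVF_X]
  rfl


/-- For `n ≥ 1` pairwise commuting linear vector fields `Y_i` on `ℝⁿ` with `D = det ℓ ≠ 0`,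
the divergences `div Y_i` cannot all vanish. -/
theorem divergences_not_all_zero {n : ℕ} (hn : 0 < n)
    (a : Fin n → Matrix (Fin n) (Fin n) ℝ)
    (hcomm : ∀ i j P, linVF (a i) (linVF (a j) P) = linVF (a j) (linVF (a i) P))
    (hD : (coeffMat a).det ≠ 0) :
    ∃ i, Matrix.trace (a i) ≠ 0 := by
  by_contra hcon
  push_neg at hcon
  set M := coeffMat a with hM
  have key : ∀ i, (linD (a i)) M.det = 0 := by
    intro i
    rw [derivation_det]
    have step : ∀ r : Fin n, (M.updateCol r fun j => (linD (a i)) (M j r)).det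
        = C (a i r r) * M.det := by
      intro r
      have hfun : (fun j => (linD (a i)) (M j r))
          = fun j => ∑ t, (C (a i r t) : MvPolynomial (Fin n) ℝ) • M j t := by
        funext j
        rw [linD_apply]
        simpa [smul_eq_mul] using linVF_coeffMat a hcomm i j r
      rw [hfun, Matrix.det_updateCol_sum M r (fun t => C (a i r t)), smul_eq_mul]
    calc (∑ r, (M.updateCol r fun j => (linD (a i)) (M j r)).det)
        = ∑ r, C (a i r r) * M.det := Finset.sum_congr rfl fun r _ => step r
      _ = C (∑ r, a i r r) * M.det := by rw [map_sum, Finset.sum_mul]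
      _ = 0 := by
          rw [show (∑ r, a i r r) = Matrix.trace (a i) from rfl, hcon i, map_zero, zero_mul]
  have hvec : M *ᵥ (fun r => pderiv r M.det) = 0 := by
    funext i
    have hk := key i
    rw [linD_apply] at hk
    simpa [linVF, Matrix.mulVec, dotProduct, hM, coeffMat] using hk
  have hmul : ∀ r, M.det * pderiv r M.det = 0 := by
    intro r
    have h2 : M.det • (fun r => pderiv r M.det) = (0 : Fin n → MvPolynomial (Fin n) ℝ) := by
      calc M.det • (fun r => pderiv r M.det)
          = (M.det • (1 : Matrix (Fin n) (Fin n) (MvPolynomial (Fin n) ℝ)))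
              *ᵥ (fun r => pderiv r M.det) := by
            rw [Matrix.smul_mulVec, Matrix.one_mulVec]
        _ = (M.adjugate * M) *ᵥ (fun r => pderiv r M.det) := by rw [Matrix.adjugate_mul]
        _ = M.adjugate *ᵥ (M *ᵥ (fun r => pderiv r M.det)) := by rw [← Matrix.mulVec_mulVec]
        _ = 0 := by rw [hvec, Matrix.mulVec_zero]
    simpa [smul_eq_mul] using congrFun h2 r
  have hpd : ∀ r, pderiv r M.det = 0 := fun r =>
    (mul_eq_zero.mp (hmul r)).resolve_left hD
  have hC : M.det = C (coeff 0 M.det) := eq_C_of_pderiv_eq_zero _ hpd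
  have h0 : constantCoeff M.det = 0 := by
    rw [RingHom.map_det]
    have hmap : (constantCoeff : MvPolynomial (Fin n) ℝ →+* ℝ).mapMatrix M = 0 := by
      ext i r
      simp [hM, coeffMat]
    rw [hmap]
    exact (haveI : Nonempty (Fin n) := ⟨⟨0, hn⟩⟩; Matrix.det_zero)
  rw [constantCoeff_eq] at h0
  exact hD (by rw [hC, h0, map_zero])
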